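/- Assume in addition that ū is bounded. Then the constructed solution satisfies, for all t ≥ 0 and all x ∈ ℝ, |u(t,x)| ≤ sup_{y∈ℝ}|ū(y)| + (t/4)·∫_ℝ ū_x(y)² dy; equivalently, for all t ≥ 0 and y ∈ ℝ, |ū(y) + ∫₀ᵗ φ(s,y) ds| ≤ ∥ū∥_{L^∞} + (t/4)·∥ū_x∥²_{L²}. -/

import Mathlib

open MeasureTheory

/-- `φ(t,y) = (1/4) ∫_{{ū_x > -2/t}} sign(y-x) ū_x(x)² dx` for `t ≠ 0`, and the full
integral `φ(0,y) = (1/4) ∫_ℝ sign(y-x) ū_x(x)² dx` at `t = 0`. -/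
noncomputable def phiHS (w : ℝ → ℝ) (t y : ℝ) : ℝ :=
  if t = 0 then (1 / 4) * ∫ x : ℝ, Real.sign (y - x) * (w x) ^ 2
  else (1 / 4) * ∫ x in {x : ℝ | w x > -2 / t}, Real.sign (y - x) * (w x) ^ 2

/-- The characteristic `ξ(t,y) = y + t ū(y) + ∫₀ᵗ (t-s) φ(s,y) ds`. -/
noncomputable def xiHS (u w : ℝ → ℝ) (t y : ℝ) : ℝ :=
  y + t * u y + ∫ s in (0 : ℝ)..t, (t - s) * phiHS w s y

/-! Every value of `φ` is a quarter of a signed partial integral of `ū_x²`, so `|φ| ≤ ‖ū_x‖²/4`;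
integrating over `[0, t]` and adding `|ū(y)| ≤ ‖ū‖_∞` gives the bound. -/

theorem abs_setIntegral_le_integral_of_abs_le {α : Type*} [MeasurableSpace α] {μ : Measure α}
    {f g : α → ℝ} (hg : Integrable g μ) (hfg : ∀ x, |f x| ≤ g x) (s : Set α) :
    |∫ x in s, f x ∂μ| ≤ ∫ x, g x ∂μ :=
  calc |∫ x in s, f x ∂μ| ≤ ∫ x in s, g x ∂μ := by
        simpa only [Real.norm_eq_abs] using
          norm_integral_le_of_norm_le (f := f) hg.restrict (ae_of_all _ hfg)
    _ ≤ ∫ x, g x ∂μ :=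
        setIntegral_le_integral hg (ae_of_all _ fun x => (abs_nonneg _).trans (hfg x))

theorem Real.abs_sign_le_one (r : ℝ) : |Real.sign r| ≤ 1 := by
  rcases Real.sign_apply_eq r with h | h | h <;> simp [h]

theorem abs_sign_mul_sq_le (r a : ℝ) : |Real.sign r * a ^ 2| ≤ a ^ 2 := by
  rw [abs_mul, abs_sq]
  exact mul_le_of_le_one_left (sq_nonneg a) (Real.abs_sign_le_one r)

theorem abs_phiHS_le {w : ℝ → ℝ} (hw : MemLp w 2 volume) (t y : ℝ) :
    |phiHS w t y| ≤ (1 / 4) * ∫ x, w x ^ 2 := by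
  have abs_partial_le (s : Set ℝ) : |∫ x in s, Real.sign (y - x) * w x ^ 2| ≤ ∫ x, w x ^ 2 :=
    abs_setIntegral_le_integral_of_abs_le hw.integrable_sq (fun x => abs_sign_mul_sq_le _ _) s
  unfold phiHS
  split_ifs <;> rw [abs_mul, abs_of_pos (by norm_num : (0 : ℝ) < 1 / 4)] <;> gcongr
  · simpa using abs_partial_le Set.univ
  · exact abs_partial_le _

theorem abs_intervalIntegral_phiHS_le {w : ℝ → ℝ} (hw : MemLp w 2 volume) {t : ℝ} (ht : 0 ≤ t)
    (y : ℝ) : |∫ s in (0 : ℝ)..t, phiHS w s y| ≤ (t / 4) * ∫ x, w x ^ 2 := by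
  have h := intervalIntegral.norm_integral_le_of_norm_le_const
    (a := 0) (b := t) fun s _ => (Real.norm_eq_abs _).symm ▸ abs_phiHS_le hw s y
  rw [Real.norm_eq_abs, sub_zero, abs_of_nonneg ht] at h
  linarith

theorem solution_sup_bound_general (ubar ubarx : ℝ → ℝ)
    (hL2 : MemLp ubarx 2 (volume : Measure ℝ))
    (hbdd : BddAbove (Set.range fun x => |ubar x|)) :
    ∀ t : ℝ, 0 ≤ t → ∀ y : ℝ,
      |ubar y + ∫ s in (0 : ℝ)..t, phiHS ubarx s y| ≤
        (⨆ x : ℝ, |ubar x|) + (t / 4) * ∫ x : ℝ, (ubarx x) ^ 2 := by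
  intro t ht y
  calc |ubar y + ∫ s in (0 : ℝ)..t, phiHS ubarx s y|
      ≤ |ubar y| + |∫ s in (0 : ℝ)..t, phiHS ubarx s y| := abs_add_le _ _
    _ ≤ (⨆ x : ℝ, |ubar x|) + (t / 4) * ∫ x : ℝ, (ubarx x) ^ 2 :=
        add_le_add (le_ciSup hbdd y) (abs_intervalIntegral_phiHS_le hL2 ht y)

/-- If the initial datum `ū` is bounded, the solution value along characteristics,
`u(t,ξ(t,y)) = ū(y) + ∫₀ᵗ φ(s,y) ds`, satisfies
`|u(t,x)| ≤ ‖ū‖_{L^∞} + (t/4) ‖ū_x‖²_{L²}` for all `t ≥ 0`. -/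
theorem solution_sup_bound (ubar ubarx : ℝ → ℝ)
    (hAC : ∀ a b : ℝ, a ≤ b → ubar b - ubar a = ∫ x in a..b, ubarx x)
    (hL2 : MemLp ubarx 2 (volume : Measure ℝ))
    (hbdd : BddAbove (Set.range fun x => |ubar x|)) :
    ∀ t : ℝ, 0 ≤ t → ∀ y : ℝ,
      |ubar y + ∫ s in (0 : ℝ)..t, phiHS ubarx s y| ≤
        (⨆ x : ℝ, |ubar x|) + (t / 4) * ∫ x : ℝ, (ubarx x) ^ 2 :=
  solution_sup_bound_general ubar ubarx hL2 hbdd
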